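/- Let h : ℝ_{>0} → ℝ be C¹ with h' strictly increasing on an interval (0, B] and h'(A) = 1 for some A ∈ (0, B). Suppose F : (−∞, s₀] → (0, B] is C¹, satisfies the ODE F'(s) = −F(s)·(h'(F(s)) − 1) for all s ≤ s₀, and lim_{s→−∞} F(s) = A. Then F(s) = A for all s ≤ s₀. -/

import Mathlib

/-!
If `F(s₁) > A`, then `F` attains its maximum over `(-∞, s₁]` (it tends to `A` at `-∞`), at some
`m` with `F(m) > A`. There the ODE gives `F'(m) < 0`, because `h'` is increasing and `h'(A) = 1`;
but a maximum over a left half-line forces `F'(m) ≥ 0`. The case `F(s₁) < A` is symmetric.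
-/

open Set Filter Topology

theorem IsLocalMaxOn.hasDerivWithinAt_Iic_nonneg {f : ℝ → ℝ} {a f' : ℝ}
    (h : IsLocalMaxOn f (Iic a) a) (hf : HasDerivWithinAt f f' (Iic a) a) : 0 ≤ f' := by
  have hcone : (a - 1) - a ∈ posTangentConeAt (Iic a) a :=
    sub_mem_posTangentConeAt_of_segment_subset <| by
      rw [segment_symm, segment_eq_Icc (by linarith)]
      exact Icc_subset_Iic_self
  have := h.hasFDerivWithinAt_nonpos hf.hasFDerivWithinAt hcone
  simp only [sub_sub_cancel_left, ContinuousLinearMap.toSpanSingleton_apply, neg_smul,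
    one_smul] at this
  linarith

theorem exists_isMaxOn_Iic_of_tendsto_atBot {G : ℝ → ℝ} {a b x₀ : ℝ}
    (hG : ContinuousOn G (Iic b)) (hlim : Tendsto G atBot (𝓝 a)) (hx₀ : x₀ ≤ b)
    (ha : a < G x₀) : ∃ m ≤ b, IsMaxOn G (Iic b) m := by
  refine hG.exists_isMaxOn' isClosed_Iic (mem_Iic.2 hx₀) ?_
  rw [cocompact_eq_atBot_atTop, inf_sup_right, eventually_sup]
  refine ⟨(hlim.eventually (gt_mem_nhds ha)).filter_mono inf_le_left |>.mono fun _ ↦ le_of_lt, ?_⟩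
  have hempty : atTop ⊓ 𝓟 (Iic b) = ⊥ := by
    rw [← disjoint_iff, disjoint_principal_right]
    filter_upwards [eventually_gt_atTop b] with x hx using not_le.2 hx
  simp [hempty]

theorem le_of_tendsto_atBot_of_hasDerivAt_neg {G g : ℝ → ℝ} {a s₀ : ℝ}
    (hG : ∀ s ≤ s₀, HasDerivAt G (g s) s) (hneg : ∀ s ≤ s₀, a < G s → g s < 0)
    (hlim : Tendsto G atBot (𝓝 a)) : ∀ s ≤ s₀, G s ≤ a := by
  intro s₁ hs₁
  by_contra! hlt
  have hcont : ContinuousOn G (Iic s₁) := fun x hx ↦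
    (hG x (le_trans hx hs₁)).continuousAt.continuousWithinAt
  obtain ⟨m, hm, hmax⟩ := exists_isMaxOn_Iic_of_tendsto_atBot hcont hlim le_rfl hlt
  have hderiv_nonneg : 0 ≤ g m :=
    ((hmax.on_subset (Iic_subset_Iic.2 hm)).localize).hasDerivWithinAt_Iic_nonneg
      (hG m (hm.trans hs₁)).hasDerivWithinAt
  have hderiv_neg : g m < 0 := hneg m (hm.trans hs₁) (hlt.trans_le (hmax (mem_Iic.2 le_rfl)))
  linarith

/-- uniqueness of the backward-asymptotic solution of the radial
Floer ODE `F' = −F(h'(F) − 1)` with `F → A` as `s → −∞`: the solution is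
constantly `A`. Here `h'` (denoted `h'`) is strictly increasing on `(0,B]`
with `h'(A) = 1`, `0 < A < B`, and `F` takes values in `(0,B]`. -/
theorem stmt5 (B A s₀ : ℝ) (hAB : 0 < A ∧ A < B)
    (h' : ℝ → ℝ) (hmono : StrictMonoOn h' (Set.Ioc (0:ℝ) B)) (hA : h' A = 1)
    (F : ℝ → ℝ)
    (hF : ∀ s ≤ s₀, HasDerivAt F (-(F s * (h' (F s) - 1))) s)
    (hrange : ∀ s ≤ s₀, F s ∈ Set.Ioc (0:ℝ) B)
    (hlim : Filter.Tendsto F Filter.atBot (nhds A)) :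
    ∀ s ≤ s₀, F s = A := by
  have hAmem : A ∈ Ioc 0 B := ⟨hAB.1, hAB.2.le⟩
  have hupper : ∀ s ≤ s₀, F s ≤ A := by
    refine le_of_tendsto_atBot_of_hasDerivAt_neg hF (fun u hu hAu ↦ ?_) hlim
    have h'_gt : 1 < h' (F u) := hA ▸ hmono hAmem (hrange u hu) hAu
    nlinarith [(hrange u hu).1]
  have hlower : ∀ s ≤ s₀, (-F) s ≤ -A := by
    refine le_of_tendsto_atBot_of_hasDerivAt_neg (G := -F)
      (fun u hu ↦ neg_neg (F u * (h' (F u) - 1)) ▸ (hF u hu).neg)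
      (fun u hu hAu ↦ ?_) hlim.neg
    have h'_lt : h' (F u) < 1 := hA ▸ hmono (hrange u hu) hAmem (neg_lt_neg_iff.1 hAu)
    nlinarith [(hrange u hu).1]
  exact fun s hs ↦ le_antisymm (hupper s hs) (neg_le_neg_iff.1 (hlower s hs))
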